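/- arXiv:2510.01007 — 4 statements merged into one kernel-verified Lean document; each statement's English description precedes it below -/
import Mathlib

section
/- Let A ∈ ℝ^{m×n}, B ∈ ℝ^{m×l}, C ∈ ℝ^{p×n}, D ∈ ℝ^{p×l}, E ∈ ℝ^{q×l}. If A has full row rank (rank A = m) and R(A) ∩ R(C) = {0}, then the row space of the block matrix [B | A] intersects the row space of the block matrix [[E, 0],[D, C]] trivially. -/
/-!
If `xᵀ [B | A] = yᵀ [[E, 0], [D, C]]`, comparing the last `n` coordinates gives
`xᵀ A = y₂ᵀ C ∈ R(A) ∩ R(C) = 0`, so `x = 0` because the rows of `A` are independent.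
-/

open Matrix

/-- The row space of a matrix: the span of its rows. -/
def rowSpace {m n : Type*} [Fintype n] (A : Matrix m n ℝ) : Submodule ℝ (n → ℝ) :=
  Submodule.span ℝ (Set.range fun i => A i)

theorem Matrix.linearIndependent_row_of_rank_eq_card {K m n : Type*} [Field K] [Fintype m]
    [Fintype n] {A : Matrix m n K} (hA : A.rank = Fintype.card m) : LinearIndependent K A.row :=
  linearIndependent_iff_card_eq_finrank_span.2 <| by
    rw [Set.finrank, ← rank_eq_finrank_span_row, hA]

section

variable {R l m n p q : Type*} [CommSemiring R] [Fintype m] [Fintype p] [Fintype q]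

theorem Matrix.mem_span_range_row_iff {M : Matrix m n R} {v : n → R} :
    v ∈ Submodule.span R (Set.range M.row) ↔ ∃ x, x ᵥ* M = v := by
  rw [← range_vecMulLinear]; rfl

theorem Matrix.span_row_fromCols_inf_span_row_fromBlocks_zero_eq_bot
    {A : Matrix m n R} {B : Matrix m l R} {C : Matrix p n R} {D : Matrix p l R}
    {E : Matrix q l R} (hA : LinearIndependent R A.row)
    (hAC : Submodule.span R (Set.range A.row) ⊓ Submodule.span R (Set.range C.row) = ⊥) :
    Submodule.span R (Set.range (fromCols B A).row) ⊓
      Submodule.span R (Set.range (fromBlocks E 0 D C).row) = ⊥ := by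
  rw [Submodule.eq_bot_iff]
  rintro _ ⟨hBA, hEDC⟩
  obtain ⟨x, rfl⟩ := mem_span_range_row_iff.1 hBA
  obtain ⟨y, hy⟩ := mem_span_range_row_iff.1 hEDC
  have hxA : (y ∘ Sum.inr) ᵥ* C = x ᵥ* A := by
    simpa [vecMul_fromBlocks] using congrArg (· ∘ Sum.inr) hy
  have hxA0 : x ᵥ* A = 0 := by
    rw [← Submodule.mem_bot R, ← hAC]
    exact ⟨mem_span_range_row_iff.2 ⟨x, rfl⟩, mem_span_range_row_iff.2 ⟨_, hxA⟩⟩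
  obtain rfl : x = 0 := vecMul_injective_iff.2 hA (hxA0.trans (zero_vecMul A).symm)
  exact zero_vecMul _

end

/-- If `A` has full row rank and `R(A) ∩ R(C) = {0}`, then the row space of
`[B | A]` intersects the row space of `[[E, 0],[D, C]]` trivially. -/
theorem stmt3 (m n l p q : ℕ)
    (A : Matrix (Fin m) (Fin n) ℝ) (B : Matrix (Fin m) (Fin l) ℝ)
    (C : Matrix (Fin p) (Fin n) ℝ) (D : Matrix (Fin p) (Fin l) ℝ)
    (E : Matrix (Fin q) (Fin l) ℝ)
    (hA : A.rank = m)
    (hAC : rowSpace A ⊓ rowSpace C = ⊥) :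
    rowSpace (Matrix.fromCols B A) ⊓
      rowSpace (Matrix.fromBlocks E (0 : Matrix (Fin q) (Fin n) ℝ) D C) = ⊥ :=
  span_row_fromCols_inf_span_row_fromBlocks_zero_eq_bot
    (linearIndependent_row_of_rank_eq_card (by rw [hA, Fintype.card_fin])) hAC
end

section
/- Let the augmented system matrices be A = [[A₀, E₀],[0, I_p]] ∈ ℝ^{(n+p)×(n+p)}, C = [C₀, 0] ∈ ℝ^{p×(n+p)}. If the triple (A₀, E₀, C₀) has no invariant zeros (the Rosenbrock matrix [[A₀ - zI, E₀],[C₀,0]] has rank n+p for all z ∈ ℂ), then the pair (A, C) is observable. -/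
open Matrix Complex

/-
The PBH matrix `[[A - z I], [C]]` of the augmented system is
`[[A₀ - z I, E₀], [0, (1 - z) I], [C₀, 0]]`. Deleting its middle block row leaves exactly the
Rosenbrock matrix `[[A₀ - z I, E₀], [C₀, 0]]`, so its rank is at least that of the Rosenbrock
matrix, which is full column rank `n + p` by hypothesis.
-/

section

variable {m n R : Type*} [DecidableEq m] [DecidableEq n] [CommRing R]

theorem fromBlocks_sub_smul_one_eq_submatrix
    (A : Matrix m m R) (E : Matrix m n R) (C : Matrix n m R) (z : R) :
    fromBlocks (A - z • 1) E C 0 =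
      (fromRows (fromBlocks A E (0 : Matrix n m R) 1 - z • 1) (fromCols C 0)).submatrix
        (Sum.elim (Sum.inl ∘ Sum.inl) Sum.inr) id := by
  ext (i | i) (j | j) <;> simp [one_apply]

theorem rank_fromBlocks_sub_smul_one_le [Fintype m] [Fintype n] [StrongRankCondition R]
    (A : Matrix m m R) (E : Matrix m n R) (C : Matrix n m R) (z : R) :
    (fromBlocks (A - z • 1) E C 0).rank ≤
      (fromRows (fromBlocks A E (0 : Matrix n m R) 1 - z • 1) (fromCols C 0)).rank := by
  rw [fromBlocks_sub_smul_one_eq_submatrix]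
  exact rank_submatrix_le _ _ _

end

/-- If `(A₀, E₀, C₀)` has no invariant zeros, then the augmented pair
`A = [[A₀, E₀],[0, I_p]]`, `C = [C₀, 0]` is observable (PBH test over `ℂ`). -/
theorem stmt5 (n p : ℕ)
    (A₀ : Matrix (Fin n) (Fin n) ℝ) (E₀ : Matrix (Fin n) (Fin p) ℝ)
    (C₀ : Matrix (Fin p) (Fin n) ℝ)
    (hrank : ∀ z : ℂ,
      (Matrix.fromBlocks (A₀.map (Complex.ofReal) - z • (1 : Matrix (Fin n) (Fin n) ℂ))
        (E₀.map Complex.ofReal) (C₀.map Complex.ofReal)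
        (0 : Matrix (Fin p) (Fin p) ℂ)).rank = n + p) :
    ∀ z : ℂ,
      (Matrix.fromRows
        ((Matrix.fromBlocks A₀ E₀ (0 : Matrix (Fin p) (Fin n) ℝ)
            (1 : Matrix (Fin p) (Fin p) ℝ)).map Complex.ofReal
          - z • (1 : Matrix (Fin n ⊕ Fin p) (Fin n ⊕ Fin p) ℂ))
        ((Matrix.fromCols C₀ (0 : Matrix (Fin p) (Fin p) ℝ)).map Complex.ofReal)).rank
      = n + p := by
  intro z
  rw [fromBlocks_map, fromCols_map, Matrix.map_zero _ ofReal_zero,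
    Matrix.map_one _ ofReal_zero ofReal_one, Matrix.map_zero _ ofReal_zero]
  refine le_antisymm ?_ ?_
  · exact (rank_le_card_width _).trans_eq (by simp)
  · exact hrank z ▸ rank_fromBlocks_sub_smul_one_le _ _ _ z
end

section
/- Define for integers r ≥ 0, k ≥ 1 and real ω ∈ (0,1): h(k) = Σ_{ι=1}^{r+1} [1/(ι-1)!] (∏_{j=-ι+1}^{-1}(k+j)) (1-ω)^{ι-1} ω^{k-ι}. Then the partial derivative of h(k) with respect to ω equals [1/r!] (∏_{j=-r-1}^{-1}(k+j)) (1-ω)^r ω^{k-r-2}, which is strictly positive for all integers k > r+1. Hence h(k) is strictly increasing in ω on (0,1) for each fixed k > r+1. -/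
/-!
With `n = k - 1`, the `ι`-th summand of `h(k)` is the Bernstein basis polynomial
`B_{n,n-ι+1}(ω) = C(n, ι-1) ω^(n-ι+1) (1-ω)^(ι-1)`, so `h(k)` is the upper binomial tail
`∑_{ν ≥ n-r} B_{n,ν}(ω)`. Since `B_{n,ν+1}' = n (B_{n-1,ν} - B_{n-1,ν+1})`, its derivative
telescopes to `n B_{n-1,n-1-r}(ω)`, which is positive on `(0,1)`.
-/

open Finset Polynomial Nat

theorem prod_range_natCast_succ_sub_succ {R : Type*} [CommRing R] (n i : ℕ) :
    ∏ j ∈ range i, (((n + 1 : ℕ) : R) - (j + 1)) = n.descFactorial i := by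
  rw [← descPochhammer_eval_eq_descFactorial, descPochhammer_eval_eq_prod_range]
  refine prod_congr rfl fun j _ => ?_
  push_cast
  ring

theorem one_div_factorial_mul_descFactorial {K : Type*} [Field K] [CharZero K] (n i : ℕ) :
    1 / (i ! : K) * n.descFactorial i = n.choose i := by
  rw [descFactorial_eq_factorial_mul_choose, Nat.cast_mul, one_div_mul_eq_div,
    mul_div_cancel_left₀ _ (by exact_mod_cast i.factorial_ne_zero)]

theorem bernsteinPolynomial_eval_sub {K : Type*} [Field K] [CharZero K] {n i : ℕ} (hi : i ≤ n)
    (w : K) :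
    (bernsteinPolynomial K n (n - i)).eval w =
      1 / (i ! : K) * (∏ j ∈ range i, (((n + 1 : ℕ) : K) - (j + 1))) * (1 - w) ^ i *
        w ^ (n - i) := by
  rw [prod_range_natCast_succ_sub_succ, one_div_factorial_mul_descFactorial, bernsteinPolynomial,
    Nat.choose_symm hi, Nat.sub_sub_self hi]
  simp only [eval_mul, eval_pow, eval_sub, eval_one, eval_X, eval_natCast]
  ring

theorem bernsteinPolynomial_eval_pos {R : Type*} [CommRing R] [LinearOrder R]
    [IsStrictOrderedRing R] {n ν : ℕ} (hν : ν ≤ n) {w : R} (hw₀ : 0 < w) (hw₁ : w < 1) :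
    0 < (bernsteinPolynomial R n ν).eval w := by
  have hchoose : (0 : R) < n.choose ν := by exact_mod_cast Nat.choose_pos hν
  have hw₁' : 0 < 1 - w := sub_pos.2 hw₁
  simp only [bernsteinPolynomial, eval_mul, eval_pow, eval_sub, eval_one, eval_X, eval_natCast]
  positivity

theorem derivative_sum_bernsteinPolynomial_sub (R : Type*) [CommRing R] {n r : ℕ} (hr : r ≤ n) :
    derivative (∑ i ∈ range (r + 1), bernsteinPolynomial R (n + 1) (n + 1 - i)) =
      (n + 1) * bernsteinPolynomial R n (n - r) := by
  induction r with
  | zero => simp [bernsteinPolynomial.derivative_succ, bernsteinPolynomial.eq_zero_of_lt]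
  | succ r ih =>
    rw [sum_range_succ, derivative_add, ih (by omega),
      show n + 1 - (r + 1) = n - (r + 1) + 1 by omega, bernsteinPolynomial.derivative_succ,
      show n - (r + 1) + 1 = n - r by omega]
    push_cast
    ring

theorem sum_Icc_eq_eval_sum_bernsteinPolynomial {K : Type*} [Field K] [CharZero K] {n r : ℕ}
    (hr : r ≤ n) (w : K) :
    ∑ ι ∈ Icc 1 (r + 1), 1 / ((ι - 1)! : K) *
        (∏ j ∈ range (ι - 1), (((n + 2 : ℕ) : K) - (j + 1))) * (1 - w) ^ (ι - 1) *
          w ^ (n + 2 - ι) =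
      (∑ i ∈ range (r + 1), bernsteinPolynomial K (n + 1) (n + 1 - i)).eval w := by
  rw [← Ico_add_one_right_eq_Icc, sum_Ico_eq_sum_range, eval_finsetSum]
  refine sum_congr rfl fun i hi => ?_
  rw [bernsteinPolynomial_eval_sub (by simp at hi; omega), Nat.add_sub_cancel_left,
    show n + 2 - (1 + i) = n + 1 - i by omega]

theorem eval_derivative_sum_bernsteinPolynomial_sub {K : Type*} [Field K] [CharZero K] {n r : ℕ}
    (hr : r ≤ n) (w : K) :
    (derivative (∑ i ∈ range (r + 1), bernsteinPolynomial K (n + 1) (n + 1 - i))).eval w =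
      1 / (r ! : K) * (∏ j ∈ range (r + 1), (((n + 2 : ℕ) : K) - (j + 1))) * (1 - w) ^ r *
        w ^ (n + 2 - r - 2) := by
  rw [derivative_sum_bernsteinPolynomial_sub K hr, eval_mul, bernsteinPolynomial_eval_sub hr,
    prod_range_natCast_succ_sub_succ, prod_range_natCast_succ_sub_succ,
    Nat.succ_descFactorial_succ, show n + 2 - r - 2 = n - r by omega]
  simp only [eval_add, eval_natCast, eval_one]
  push_cast
  ring

/-- For `k > r+1`, the derivative with respect to `ω` of
`h(k) = Σ_{ι=1}^{r+1} (1/(ι-1)!) (∏_{j=-ι+1}^{-1}(k+j)) (1-ω)^{ι-1} ω^{k-ι}`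
equals `(1/r!) (∏_{j=-r-1}^{-1}(k+j)) (1-ω)^r ω^{k-r-2}`, which is strictly
positive; hence `ω ↦ h(k)` is strictly monotone on `(0,1)`. -/
theorem stmt9 (r k : ℕ) (hk : r + 1 < k) :
    (∀ ω : ℝ, 0 < ω → ω < 1 →
      HasDerivAt (fun w : ℝ =>
          ∑ ι ∈ Finset.Icc 1 (r + 1),
            (1 / (Nat.factorial (ι - 1) : ℝ)) *
              (∏ j ∈ Finset.range (ι - 1), ((k : ℝ) - (j + 1))) *
              (1 - w) ^ (ι - 1) * w ^ (k - ι))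
        ((1 / (Nat.factorial r : ℝ)) *
            (∏ j ∈ Finset.range (r + 1), ((k : ℝ) - (j + 1))) *
            (1 - ω) ^ r * ω ^ (k - r - 2)) ω ∧
      0 < (1 / (Nat.factorial r : ℝ)) *
            (∏ j ∈ Finset.range (r + 1), ((k : ℝ) - (j + 1))) *
            (1 - ω) ^ r * ω ^ (k - r - 2)) ∧
    StrictMonoOn (fun w : ℝ =>
        ∑ ι ∈ Finset.Icc 1 (r + 1),
          (1 / (Nat.factorial (ι - 1) : ℝ)) *
            (∏ j ∈ Finset.range (ι - 1), ((k : ℝ) - (j + 1))) *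
            (1 - w) ^ (ι - 1) * w ^ (k - ι))
      (Set.Ioo (0 : ℝ) 1) := by
  obtain ⟨n, rfl⟩ : ∃ n, k = n + 2 := ⟨k - 2, by omega⟩
  have hr : r ≤ n := by omega
  set p : ℝ[X] := ∑ i ∈ range (r + 1), bernsteinPolynomial ℝ (n + 1) (n + 1 - i)
  have hpos : ∀ ω ∈ Set.Ioo (0 : ℝ) 1, 0 < (derivative p).eval ω := fun ω hω => by
    rw [derivative_sum_bernsteinPolynomial_sub ℝ hr, eval_mul]
    simp only [eval_add, eval_natCast, eval_one]
    exact mul_pos (by positivity) (bernsteinPolynomial_eval_pos (Nat.sub_le n r) hω.1 hω.2)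
  simp only [sum_Icc_eq_eval_sum_bernsteinPolynomial hr,
    ← eval_derivative_sum_bernsteinPolynomial_sub hr]
  refine ⟨fun ω h₀ h₁ => ⟨p.hasDerivAt ω, hpos ω ⟨h₀, h₁⟩⟩, ?_⟩
  exact strictMonoOn_of_hasDerivWithinAt_pos (convex_Ioo 0 1) p.continuousOn
    (fun ω _ => (p.hasDerivAt ω).hasDerivWithinAt) (by simpa using hpos)
end

section
/- Define for integers r ≥ 0, k ≥ 1 and real ω ∈ (0,1): h(k) = Σ_{ι=1}^{r+1} [1/(ι-1)!] (∏_{j=-ι+1}^{-1}(k+j)) (1-ω)^{ι-1} ω^{k-ι}. Then h(k+1) - h(k) = -[1/r!] (∏_{j=-r}^{-1}(k+j)) (1-ω)^{r+1} ω^{k-r-1}, which is strictly negative for all integers k ≥ r+1. Hence h is strictly decreasing in k for k ≥ r+1. -/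
/-!
Writing `k = n + 1`, the factor `(1/(ι-1)!) ∏ (k+j)` is the binomial coefficient `C(n, ι-1)`, so
`h(n+1) = Σ_{i ≤ r} C(n,i) (1-ω)^i ω^(n-i)` is the lower tail `P(Bin(n, 1-ω) ≤ r)`. By Pascal's
rule, passing from `n` to `n + 1` multiplies the partial binomial sum by `ω + (1-ω) = 1` and
subtracts the single term `C(n,r) (1-ω)^(r+1) ω^(n-r)`, which is positive for `r ≤ n`.
-/

open Finset

lemma one_div_factorial_mul_prod_range_sub_eq_choose {K : Type*} [Field K] [CharZero K]
    (n i : ℕ) :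
    1 / (i.factorial : K) * ∏ j ∈ range i, (((n + 1 : ℕ) : K) - (j + 1)) = n.choose i := by
  rw [Nat.cast_choose_eq_descPochhammer_div, descPochhammer_eval_eq_prod_range, one_div_mul_eq_div]
  congr 1
  refine prod_congr rfl fun j _ => ?_
  push_cast
  ring

lemma sum_range_choose_succ_mul_pow {R : Type*} [CommRing R] (a b : R) {r n : ℕ} (hrn : r ≤ n) :
    ∑ i ∈ range (r + 1), ((n + 1).choose i : R) * b ^ i * a ^ (n + 1 - i) =
      (a + b) * ∑ i ∈ range (r + 1), (n.choose i : R) * b ^ i * a ^ (n - i)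
        - n.choose r * b ^ (r + 1) * a ^ (n - r) := by
  induction r with
  | zero =>
    simp only [zero_add, sum_range_one, Nat.choose_zero_right, Nat.cast_one, pow_zero, pow_one,
      Nat.sub_zero]
    ring
  | succ r ih =>
    rw [sum_range_succ _ (r + 1), sum_range_succ _ (r + 1), ih (by omega), Nat.choose_succ_succ,
      Nat.cast_add, show n + 1 - (r + 1) = n - (r + 1) + 1 by omega,
      show n - r = n - (r + 1) + 1 by omega]
    ring

/-- For `h(k) = Σ_{ι=1}^{r+1} (1/(ι-1)!) (∏_{j=-ι+1}^{-1}(k+j)) (1-ω)^{ι-1} ω^{k-ι}`,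
one has `h(k+1) - h(k) = -(1/r!) (∏_{j=-r}^{-1}(k+j)) (1-ω)^{r+1} ω^{k-r-1} < 0`
for all `k ≥ r+1`; hence `h` is strictly decreasing in `k` for `k ≥ r+1`. -/
theorem stmt10 (r : ℕ) (ω : ℝ) (hω : 0 < ω) (hω1 : ω < 1)
    (h : ℕ → ℝ)
    (hdef : ∀ k : ℕ, h k =
      ∑ ι ∈ Finset.Icc 1 (r + 1),
        (1 / (Nat.factorial (ι - 1) : ℝ)) *
          (∏ j ∈ Finset.range (ι - 1), ((k : ℝ) - (j + 1))) *
          (1 - ω) ^ (ι - 1) * ω ^ (k - ι)) :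
    ∀ k : ℕ, r + 1 ≤ k →
      (h (k + 1) - h k =
        -((1 / (Nat.factorial r : ℝ)) *
            (∏ j ∈ Finset.range r, ((k : ℝ) - (j + 1))) *
            (1 - ω) ^ (r + 1) * ω ^ (k - r - 1))) ∧
      h (k + 1) - h k < 0 ∧ h (k + 1) < h k := by
  have h_succ : ∀ n,
      h (n + 1) = ∑ i ∈ range (r + 1), (n.choose i : ℝ) * (1 - ω) ^ i * ω ^ (n - i) := by
    intro n
    rw [hdef, ← Ico_add_one_right_eq_Icc, sum_Ico_eq_sum_range]
    refine sum_congr rfl fun i _ => ?_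
    rw [show 1 + i - 1 = i by omega, show n + 1 - (1 + i) = n - i by omega,
      one_div_factorial_mul_prod_range_sub_eq_choose]
  intro k hk
  obtain ⟨n, rfl⟩ : ∃ n, k = n + 1 := ⟨k - 1, by omega⟩
  have h_diff : h (n + 1 + 1) - h (n + 1) = -(n.choose r * (1 - ω) ^ (r + 1) * ω ^ (n - r)) := by
    rw [h_succ, h_succ, sum_range_choose_succ_mul_pow ω (1 - ω) (by omega : r ≤ n)]
    ring
  have h_pos : 0 < (n.choose r : ℝ) * (1 - ω) ^ (r + 1) * ω ^ (n - r) := by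
    have := Nat.choose_pos (by omega : r ≤ n)
    have := sub_pos.2 hω1
    positivity
  refine ⟨?_, by linarith, by linarith⟩
  rw [h_diff, one_div_factorial_mul_prod_range_sub_eq_choose,
    show n + 1 - r - 1 = n - r by omega]
end
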